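/- Suppose f satisfies the positivity condition and the weight function τ satisfies τ(y) ≥ 0 and τ(y) ≥ τ_i*(y) for every index i and every y in the nonnegative orthant. Let h > 0 and let (y^k) be the sequence defined by y^{k+1} = Φ(y^k) from an initial point y^0 with y^0 i ≥ 0 for all i. Then y^k i ≥ 0 for all i and all k ≥ 0, i.e., the NSFD model admits the nonnegative orthant as a positively invariant set for every value of the step size. -/

import Mathlib

/-!
The condition `τ ≥ τ_i*` says exactly that `f i (y) + τ(y) y_i ≥ 0` on the orthant (the positivity
condition handles `y_i = 0`). Writing one step over the common denominator,
`y_i + h f_i / (1 + h τ) = (y_i + h (f_i + τ y_i)) / (1 + h τ)`,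
both numerator and denominator are nonnegative, whatever `h > 0` is.
-/

lemma neg_le_mul_of_ite_le {φ y t : ℝ} (hy : 0 ≤ y) (hφ : y = 0 → 0 ≤ φ)
    (ht : (if 0 ≤ φ then 0 else -φ / y) ≤ t) : -φ ≤ t * y := by
  split_ifs at ht with hφ_nonneg
  · nlinarith
  · have hy_pos : 0 < y := hy.lt_of_ne fun hy0 => hφ_nonneg (hφ hy0.symm)
    exact (div_le_iff₀ hy_pos).mp ht

lemma add_mul_div_one_add_mul_nonneg {y φ h t : ℝ} (hy : 0 ≤ y) (hh : 0 ≤ h) (ht : 0 ≤ t)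
    (hφ : -φ ≤ t * y) : 0 ≤ y + h * φ / (1 + h * t) := by
  have hden : 0 < 1 + h * t := by positivity
  have hnum : 0 ≤ y + h * (φ + t * y) := by nlinarith
  calc 0 ≤ (y + h * (φ + t * y)) / (1 + h * t) := div_nonneg hnum hden.le
    _ = y + h * φ / (1 + h * t) := by field_simp; ring

theorem nsfd_positively_invariant_general
    (n : ℕ)
    (f : (Fin n → ℝ) → (Fin n → ℝ))
    (hpos : ∀ i : Fin n, ∀ y : Fin n → ℝ,
      (∀ j, 0 ≤ y j) → y i = 0 → 0 ≤ f y i)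
    (τ : (Fin n → ℝ) → ℝ)
    (hτ0 : ∀ y : Fin n → ℝ, (∀ j, 0 ≤ y j) → 0 ≤ τ y)
    (hτstar : ∀ y : Fin n → ℝ, (∀ j, 0 ≤ y j) → ∀ i : Fin n,
      τ y ≥ (if 0 ≤ f y i then 0 else -(f y i) / y i))
    (h : ℝ) (hh : 0 < h)
    (Y : ℕ → (Fin n → ℝ))
    (hY : ∀ k, ∀ i, Y (k + 1) i = Y k i + h * f (Y k) i / (1 + h * τ (Y k)))
    (hY0 : ∀ i, 0 ≤ Y 0 i) :
    ∀ k, ∀ i, 0 ≤ Y k i := by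
  intro k
  induction k with
  | zero => exact hY0
  | succ k ih =>
    intro i
    rw [hY k i]
    exact add_mul_div_one_add_mul_nonneg (ih i) hh.le (hτ0 _ ih)
      (neg_le_mul_of_ite_le (ih i) (hpos i _ ih) (hτstar _ ih i))

/-- The NSFD model admits the nonnegative orthant as a positively invariant
set for every value of the step size: any NSFD trajectory starting in the
nonnegative orthant stays in it. -/
theorem nsfd_positively_invariant
    (n : ℕ) (hn : 1 ≤ n)
    (f : (Fin n → ℝ) → (Fin n → ℝ))
    (hpos : ∀ i : Fin n, ∀ y : Fin n → ℝ,
      (∀ j, 0 ≤ y j) → y i = 0 → 0 ≤ f y i)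
    (τ : (Fin n → ℝ) → ℝ)
    (hτ0 : ∀ y : Fin n → ℝ, (∀ j, 0 ≤ y j) → 0 ≤ τ y)
    (hτstar : ∀ y : Fin n → ℝ, (∀ j, 0 ≤ y j) → ∀ i : Fin n,
      τ y ≥ (if 0 ≤ f y i then 0 else -(f y i) / y i))
    (h : ℝ) (hh : 0 < h)
    (Y : ℕ → (Fin n → ℝ))
    (hY : ∀ k, ∀ i, Y (k + 1) i = Y k i + h * f (Y k) i / (1 + h * τ (Y k)))
    (hY0 : ∀ i, 0 ≤ Y 0 i) :
    ∀ k, ∀ i, 0 ≤ Y k i :=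
  nsfd_positively_invariant_general n f hpos τ hτ0 hτstar h hh Y hY hY0
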